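/- arXiv:2301.06446 — 2 statements merged into one kernel-verified Lean document; each statement's English description precedes it below -/
import Mathlib

section
/- Let m ≡ 0 (mod 4) with m ≥ 4, n = 2^m − 1, and v = 2^{(m−2)/2} − 1. Then gcd(v, n) = 1, and for every integer a with 1 ≤ a ≤ 2^{(m−2)/2}, the binary weight of a·v equals (m−2)/2. -/
/-!
Write `k = (m - 2) / 2`, so `m = 2k + 2` with `k` odd and `v = 2^k - 1`. Since
`gcd (2^k - 1) (2^m - 1) = 2^(gcd k m) - 1` and `gcd k (2k + 2) = gcd k 2 = 1`, the gcd is `1`.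
For `1 ≤ a ≤ 2^k`, `a v = (a - 1) 2^k + (2^k - a)` places the binary digits of `a - 1` above those
of `2^k - a`; these two numbers add up to `2^k - 1`, so their binary digits are complementary and
their weights add up to `k`.
-/

def w2 (x : ℕ) : ℕ := (Nat.digits 2 x).sum

namespace Nat

theorem digits_sum_add_base_pow_mul {b k c : ℕ} (hb : 1 < b) (hc : c < b ^ k) (d : ℕ) :
    (digits b (c + b ^ k * d)).sum = (digits b c).sum + (digits b d).sum := by
  rcases Nat.eq_zero_or_pos d with rfl | hd
  · simp
  have hlen : (digits b c).length ≤ k := (digits_length_le_iff hb c).2 hc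
  have := digits_append_zeroes_append_digits (k := k - (digits b c).length) hb hd (n := c)
  rw [Nat.add_sub_cancel' hlen] at this
  simp [← this]

end Nat

theorem w2_eq_mod_add_w2_div (x : ℕ) : w2 x = x % 2 + w2 (x / 2) := by
  rcases Nat.eq_zero_or_pos x with rfl | hx
  · simp [w2]
  · simp [w2, Nat.digits_def' one_lt_two hx]

theorem w2_add_w2_of_add_eq_two_pow_sub_one :
    ∀ {k x y : ℕ}, x + y = 2 ^ k - 1 → w2 x + w2 y = k
  | 0, x, y, h => by
    obtain ⟨rfl, rfl⟩ : x = 0 ∧ y = 0 := by simpa using h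
    simp [w2]
  | k + 1, x, y, h => by
    have hpow : 1 ≤ 2 ^ k := Nat.one_le_two_pow
    rw [pow_succ] at h
    -- the last binary digits of `x` and `y` are complementary, and so are the remaining ones
    have hhalf : x / 2 + y / 2 = 2 ^ k - 1 := by omega
    have ih := w2_add_w2_of_add_eq_two_pow_sub_one hhalf
    rw [w2_eq_mod_add_w2_div x, w2_eq_mod_add_w2_div y]
    omega

theorem w2_mul_two_pow_sub_one {k a : ℕ} (ha : 1 ≤ a) (ha' : a ≤ 2 ^ k) :
    w2 (a * (2 ^ k - 1)) = k := by
  have hsplit : a * (2 ^ k - 1) = (2 ^ k - a) + 2 ^ k * (a - 1) := by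
    zify [ha, ha', Nat.one_le_two_pow]
    ring
  rw [hsplit, w2, Nat.digits_sum_add_base_pow_mul one_lt_two (by omega), add_comm]
  exact w2_add_w2_of_add_eq_two_pow_sub_one (by omega)

theorem stmt8 (m : ℕ) (hm : m % 4 = 0) (hm4 : 4 ≤ m)
    (n v : ℕ) (hn : n = 2 ^ m - 1) (hv : v = 2 ^ ((m - 2) / 2) - 1) :
    Nat.gcd v n = 1 ∧
    ∀ a : ℕ, 1 ≤ a → a ≤ 2 ^ ((m - 2) / 2) → w2 (a * v) = (m - 2) / 2 := by
  subst hn hv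
  set k := (m - 2) / 2
  have hcop : Nat.gcd k m = 1 := by
    have hm' : m = 2 + k * 2 := by omega
    rw [hm', Nat.gcd_add_mul_left_right, ← Nat.coprime_iff_gcd_eq_one, Nat.coprime_two_right]
    exact Nat.odd_iff.2 (by omega)
  refine ⟨by simp [hcop], fun a ha ha' => w2_mul_two_pow_sub_one ha ha'⟩
end

section
/- Let m ≡ 0 (mod 6) with m ≥ 6 and n = 2^m − 1. For i ∈ {0,1,2}, define T_i = { 1 ≤ j ≤ n−1 : w₂(j) ≡ i (mod 3) }. Then |T_0| = (2^m − 4)/3 and |T_1| = |T_2| = (2^m − 1)/3. -/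
open Finset

/-! The number of `j < 2 ^ m` with `w2 j ≡ i (mod 3)` is `∑_{k ≡ i (3)} (m choose k)`, which equals
`(2 ^ m + 2 cos ((m - 2 i) π / 3)) / 3` (below, `-2 i` is written `4 i`, as it only matters mod 6).
Splitting off the top bit gives the recurrence `c (m + 1) i = c m i + c m (i - 1)`, and the closed
form satisfies it because `2 cos (k π / 3) + 2 cos ((k + 2) π / 3) = 2 cos ((k + 1) π / 3)`.
For `6 ∣ m` the closed form is `(2 ^ m + 2) / 3` for `i = 0` and `(2 ^ m - 1) / 3` otherwise;
removing `j = 0` and `j = 2 ^ m - 1 = n`, both of weight `≡ 0 (mod 3)`, leaves the sets `T i`. -/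

lemma w2_zero : w2 0 = 0 := rfl

lemma w2_two_pow_add {m j : ℕ} (hj : j < 2 ^ m) : w2 (2 ^ m + j) = w2 j + 1 := by
  have hlen : (Nat.digits 2 j).length ≤ m := (Nat.digits_length_le_iff one_lt_two j).2 hj
  have hdigits := Nat.digits_append_zeroes_append_digits (b := 2) (k := m - (Nat.digits 2 j).length)
    (m := 1) (n := j) one_lt_two one_pos
  rw [Nat.add_sub_cancel' hlen, mul_one] at hdigits
  rw [w2, add_comm, ← hdigits]
  simp [w2]

lemma w2_two_pow_sub_one (m : ℕ) : w2 (2 ^ m - 1) = m := by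
  induction m with
  | zero => rfl
  | succ m ih =>
    have h : 2 ^ (m + 1) - 1 = 2 ^ m + (2 ^ m - 1) := by
      have := Nat.one_le_two_pow (n := m)
      rw [pow_succ]
      omega
    rw [h, w2_two_pow_add (Nat.sub_lt (Nat.two_pow_pos m) one_pos), ih]

def weightResidueCount (m i : ℕ) : ℕ := #{j ∈ range (2 ^ m) | w2 j % 3 = i}

lemma weightResidueCount_succ (m : ℕ) {i : ℕ} (hi : i < 3) :
    weightResidueCount (m + 1) i = weightResidueCount m i + weightResidueCount m ((i + 2) % 3) := by
  simp only [weightResidueCount, card_filter, pow_succ, mul_two, sum_range_add]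
  congr 1
  refine sum_congr rfl fun j hj => ?_
  rw [w2_two_pow_add (mem_range.1 hj)]
  congr 1
  exact propext (by omega)

/-- `2 cos (k π / 3)`. -/
def twoCosPiDivThree (k : ℕ) : ℤ :=
  match k % 6 with
  | 0 => 2
  | 1 => 1
  | 2 => -1
  | 3 => -2
  | 4 => -1
  | _ => 1

lemma twoCosPiDivThree_congr {k l : ℕ} (h : k % 6 = l % 6) :
    twoCosPiDivThree k = twoCosPiDivThree l := by
  simp only [twoCosPiDivThree, h]

lemma twoCosPiDivThree_add_one (k : ℕ) :
    twoCosPiDivThree (k + 1) = twoCosPiDivThree k + twoCosPiDivThree (k + 2) := by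
  have hk := Nat.mod_lt k (show 6 > 0 by norm_num)
  simp only [twoCosPiDivThree, Nat.add_mod k]
  interval_cases k % 6 <;> rfl

lemma three_mul_weightResidueCount (m : ℕ) {i : ℕ} (hi : i < 3) :
    3 * (weightResidueCount m i : ℤ) = 2 ^ m + twoCosPiDivThree (m + 4 * i) := by
  induction m generalizing i with
  | zero => interval_cases i <;> rfl
  | succ m ih =>
    rw [weightResidueCount_succ m hi, Nat.cast_add, mul_add, ih hi, ih (Nat.mod_lt _ three_pos),
      twoCosPiDivThree_congr (k := m + 4 * ((i + 2) % 3)) (l := m + 4 * i + 2) (by omega),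
      show m + 1 + 4 * i = m + 4 * i + 1 by ring, pow_succ]
    linarith [twoCosPiDivThree_add_one (m + 4 * i)]

lemma weightResidueCount_of_six_dvd {m : ℕ} (hm : 6 ∣ m) :
    3 * weightResidueCount m 0 = 2 ^ m + 2 ∧ 3 * weightResidueCount m 1 + 1 = 2 ^ m ∧
      3 * weightResidueCount m 2 + 1 = 2 ^ m := by
  have h {i : ℕ} (hi : i < 3) :
      3 * (weightResidueCount m i : ℤ) = 2 ^ m + twoCosPiDivThree (4 * i) := by
    rw [three_mul_weightResidueCount m hi, twoCosPiDivThree_congr (l := 4 * i) (by omega)]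
  refine ⟨?_, ?_, ?_⟩ <;> zify
  · linarith [h (i := 0) (by norm_num), show twoCosPiDivThree (4 * 0) = 2 from rfl]
  · linarith [h (i := 1) (by norm_num), show twoCosPiDivThree (4 * 1) = -1 from rfl]
  · linarith [h (i := 2) (by norm_num), show twoCosPiDivThree (4 * 2) = -1 from rfl]

lemma card_filter_range_eq {N : ℕ} (hN : 2 ≤ N) (p : ℕ → Prop) [DecidablePred p] :
    #{j ∈ range N | p j} =
      #{j ∈ Icc 1 (N - 2) | p j} + (if p 0 then 1 else 0) + (if p (N - 1) then 1 else 0) := by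
  have hsplit : range N = insert 0 (insert (N - 1) (Icc 1 (N - 2))) := by
    ext j
    simp only [mem_range, mem_insert, mem_Icc]
    omega
  rw [hsplit, card_filter, card_filter, sum_insert, sum_insert]
  · ring
  · simp only [mem_Icc]; omega
  · simp only [mem_insert, mem_Icc]; omega

theorem stmt13 (m : ℕ) (hm : m % 6 = 0) (hm6 : 6 ≤ m) (n : ℕ) (hn : n = 2 ^ m - 1) :
    let T : ℕ → Finset ℕ := fun i => (Finset.Icc 1 (n - 1)).filter (fun j => w2 j % 3 = i)
    (T 0).card = (2 ^ m - 4) / 3 ∧ (T 1).card = (2 ^ m - 1) / 3 ∧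
    (T 2).card = (2 ^ m - 1) / 3 := by
  intro T
  have h64 : 2 ^ 6 ≤ 2 ^ m := Nat.pow_le_pow_right two_pos hm6
  have hcount i : weightResidueCount m i = #(T i) + 2 * (if 0 = i then 1 else 0) := by
    rw [weightResidueCount, card_filter_range_eq (by omega), w2_zero, w2_two_pow_sub_one,
      show m % 3 = 0 by omega, show 2 ^ m - 2 = n - 1 by omega]
    ring
  obtain ⟨h0, h1, h2⟩ := weightResidueCount_of_six_dvd (Nat.dvd_of_mod_eq_zero hm)
  simp only [hcount, Nat.reduceEqDiff, ↓reduceIte] at h0 h1 h2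
  omega
end
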